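/- arXiv:1607.03482 — 5 statements merged into one kernel-verified Lean document; each statement's English description precedes it below -/
import Mathlib

section
/- Let c > 0 and let x : ℝ → ℝ³ be C¹ with ‖x'(t)‖ < c for all t. Set ξ(t) := c·t − x³(t); then ξ is strictly increasing with C¹ inverse t̂ on the open interval J = ξ(ℝ), and x̂ := x ∘ t̂ is C¹ on J. For every t ∈ ℝ: (i) x̂'(ξ(t)) = x'(t)/(c − (x³)'(t)); (ii) 1 + 2(x̂³)'(ξ(t)) − ((x̂¹)'(ξ(t)))² − ((x̂²)'(ξ(t)))² = (1 − ‖x'(t)‖²/c²)/(1 − (x³)'(t)/c)² > 0; (iii) hence, defining s(t) := (1 − (x³)'(t)/c)/√(1 − ‖x'(t)‖²/c²), one has 1/s(t) = √(1 + 2(x̂³)'(ξ(t)) − ((x̂¹)'(ξ(t)))² − ((x̂²)'(ξ(t)))²). -/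
/-!
Since `|(x³)'| ≤ ‖x'‖ < c`, the light-like coordinate `ξ` has derivative `c - (x³)' > 0`, so it is
strictly increasing and, by the inverse function theorem, its inverse `t̂` is `C¹` on the range
with `t̂'(ξ(t)) = 1 / (c - (x³)'(t))`; the chain rule then gives (i). With `v = x'(t)`, (ii) is the
identity `(c - v³)² + 2 v³ (c - v³) - (v¹)² - (v²)² = c² - ‖v‖²` divided by `(c - v³)²`, and (iii)
is its square root.
-/

open Function Set

theorem HasStrictDerivAt.invFun_of_injective {𝕜 : Type*} [NontriviallyNormedField 𝕜]
    [CompleteSpace 𝕜] {f : 𝕜 → 𝕜} {f' a : 𝕜} (hf : HasStrictDerivAt f f' a) (hf' : f' ≠ 0)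
    (hinj : Injective f) : HasStrictDerivAt (invFun f) f'⁻¹ (f a) :=
  hf.to_local_left_inverse hf' (.of_forall (leftInverse_invFun hinj))

theorem HasDerivAt.comp_invFun {𝕜 F : Type*} [NontriviallyNormedField 𝕜] [CompleteSpace 𝕜]
    [NormedAddCommGroup F] [NormedSpace 𝕜 F] {f : 𝕜 → 𝕜} {f' a : 𝕜} {x : 𝕜 → F} {v : F}
    (hx : HasDerivAt x v a) (hf : HasStrictDerivAt f f' a) (hf' : f' ≠ 0) (hinj : Injective f) :
    HasDerivAt (x ∘ invFun f) (f'⁻¹ • v) (f a) := by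
  rw [← leftInverse_invFun hinj a] at hx
  exact hx.scomp (f a) (hf.invFun_of_injective hf' hinj).hasDerivAt

theorem ContDiff.contDiffOn_invFun_range {𝕂 : Type*} [RCLike 𝕂] {f : 𝕂 → 𝕂} {n : WithTop ℕ∞}
    (hf : ContDiff 𝕂 n f) (hn : n ≠ 0) (hinj : Injective f) (h0 : ∀ a, deriv f a ≠ 0) :
    ContDiffOn 𝕂 n (invFun f) (range f) := by
  rintro _ ⟨a, rfl⟩
  have hfa : ContDiffAt 𝕂 n f a := hf.contDiffAt
  have hf' := (hfa.hasStrictDerivAt hn).hasDerivAt.hasFDerivAt_equiv (h0 a)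
  have hg := hfa.to_localInverse hf' hn
  -- `invFun f` agrees with the local inverse near `f a` because `f` is injective.
  refine (hg.congr_of_eventuallyEq ?_).contDiffWithinAt
  filter_upwards [(hfa.hasStrictFDerivAt' hf' hn).eventually_right_inverse] with y hy
  nth_rw 1 [← hy]
  exact leftInverse_invFun hinj _

theorem HasDerivAt.piLp_apply {𝕜 ι : Type*} [NontriviallyNormedField 𝕜] [Fintype ι]
    {p : ENNReal} [Fact (1 ≤ p)] {E : ι → Type*} [∀ i, NormedAddCommGroup (E i)]
    [∀ i, NormedSpace 𝕜 (E i)] {f : 𝕜 → PiLp p E} {f' : PiLp p E} {t : 𝕜}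
    (h : HasDerivAt f f' t) (i : ι) : HasDerivAt (fun s => f s i) (f' i) t :=
  (PiLp.hasFDerivAt_apply p (f t) i).comp_hasDerivAt t h

theorem Real.inv_div_sqrt_eq_sqrt_div_sq {u : ℝ} (hu : 0 ≤ u) (w : ℝ) :
    (u / √w)⁻¹ = √(w / u ^ 2) := by
  rw [Real.sqrt_div' w (sq_nonneg u), Real.sqrt_sq hu, inv_div]

theorem EuclideanSpace.apply_lt_of_norm_lt {ι : Type*} [Fintype ι] {v : EuclideanSpace ℝ ι}
    {c : ℝ} (h : ‖v‖ < c) (i : ι) : v i < c :=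
  (le_abs_self _).trans_lt ((PiLp.norm_apply_le v i).trans_lt h)

theorem one_sub_norm_sq_div_sq_pos {E : Type*} [SeminormedAddCommGroup E] {v : E} {c : ℝ}
    (h : ‖v‖ < c) : 0 < 1 - ‖v‖ ^ 2 / c ^ 2 := by
  have hc : 0 < c := (norm_nonneg v).trans_lt h
  rw [sub_pos, div_lt_one (by positivity)]
  exact pow_lt_pow_left₀ h (norm_nonneg v) two_ne_zero

section LightlikeCoordinate

variable {ι : Type*} [Fintype ι] {x : ℝ → EuclideanSpace ℝ ι}

theorem HasDerivAt.lightlike {v : EuclideanSpace ℝ ι} {t : ℝ} (h : HasDerivAt x v t) (c : ℝ)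
    (k : ι) : HasDerivAt (fun s => c * s - x s k) (c - v k) t := by
  have h' := ((hasDerivAt_id' t).const_mul c).sub (h.piLp_apply k)
  rwa [mul_one] at h'

theorem strictMono_lightlike {c : ℝ} (hx : Differentiable ℝ x) (hlt : ∀ t, ‖deriv x t‖ < c) (k : ι) :
    StrictMono fun t => c * t - x t k :=
  strictMono_of_hasDerivAt_pos (fun t => (hx t).hasDerivAt.lightlike c k)
    fun t => sub_pos.2 (EuclideanSpace.apply_lt_of_norm_lt (hlt t) k)

end LightlikeCoordinate

theorem lightlike_form_eq {c : ℝ} (hc : c ≠ 0) {v : EuclideanSpace ℝ (Fin 3)} (h : v 2 ≠ c) :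
    1 + 2 * ((c - v 2)⁻¹ * v 2) - ((c - v 2)⁻¹ * v 0) ^ 2 - ((c - v 2)⁻¹ * v 1) ^ 2
      = (1 - ‖v‖ ^ 2 / c ^ 2) / (1 - v 2 / c) ^ 2 := by
  have h' : c - v 2 ≠ 0 := sub_ne_zero.2 h.symm
  rw [EuclideanSpace.real_norm_sq_eq, Fin.sum_univ_three]
  field_simp
  ring

/-- If `x : ℝ → ℝ³` is C¹ with `‖x'(t)‖ < c`, then
`ξ(t) = c·t − x³(t)` is strictly increasing with a C¹ inverse `t̂` on `J = ξ(ℝ)`,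
`x̂ = x ∘ t̂` is C¹ on `J`, and for every `t`:
(i) `x̂'(ξ(t)) = x'(t)/(c − (x³)'(t))`;
(ii) `1 + 2(x̂³)' − ((x̂¹)')² − ((x̂²)')² = (1 − ‖x'‖²/c²)/(1 − (x³)'/c)² > 0` at `ξ(t)`;
(iii) with `s(t) = (1 − (x³)'(t)/c)/√(1 − ‖x'(t)‖²/c²)`, one has
`1/s(t) = √(1 + 2(x̂³)' − ((x̂¹)')² − ((x̂²)')²)` at `ξ(t)`. -/
theorem stmt_2 (c : ℝ) (hc : 0 < c) (x : ℝ → EuclideanSpace ℝ (Fin 3))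
    (hx : ContDiff ℝ 1 x) (hlt : ∀ t : ℝ, ‖deriv x t‖ < c) :
    StrictMono (fun t : ℝ => c * t - x t 2) ∧
    ∃ tinv : ℝ → ℝ,
      (∀ t : ℝ, tinv (c * t - x t 2) = t) ∧
      ContDiffOn ℝ 1 tinv (Set.range fun t : ℝ => c * t - x t 2) ∧
      ContDiffOn ℝ 1 (x ∘ tinv) (Set.range fun t : ℝ => c * t - x t 2) ∧
      ∀ t : ℝ,
        HasDerivAt (x ∘ tinv) ((c - deriv (fun s : ℝ => x s 2) t)⁻¹ • deriv x t)
          (c * t - x t 2) ∧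
        (1 + 2 * deriv (fun ξ : ℝ => (x ∘ tinv) ξ 2) (c * t - x t 2)
            - (deriv (fun ξ : ℝ => (x ∘ tinv) ξ 0) (c * t - x t 2)) ^ 2
            - (deriv (fun ξ : ℝ => (x ∘ tinv) ξ 1) (c * t - x t 2)) ^ 2
          = (1 - ‖deriv x t‖ ^ 2 / c ^ 2) / (1 - deriv (fun s : ℝ => x s 2) t / c) ^ 2) ∧
        (0 < (1 - ‖deriv x t‖ ^ 2 / c ^ 2) / (1 - deriv (fun s : ℝ => x s 2) t / c) ^ 2) ∧
        ((1 - deriv (fun s : ℝ => x s 2) t / c) / Real.sqrt (1 - ‖deriv x t‖ ^ 2 / c ^ 2))⁻¹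
          = Real.sqrt (1 + 2 * deriv (fun ξ : ℝ => (x ∘ tinv) ξ 2) (c * t - x t 2)
              - (deriv (fun ξ : ℝ => (x ∘ tinv) ξ 0) (c * t - x t 2)) ^ 2
              - (deriv (fun ξ : ℝ => (x ∘ tinv) ξ 1) (c * t - x t 2)) ^ 2) := by
  set ξ : ℝ → ℝ := fun t => c * t - x t 2
  have hv (t : ℝ) : HasDerivAt x (deriv x t) t := (hx.differentiable one_ne_zero t).hasDerivAt
  have hv₂_lt (t : ℝ) : deriv x t 2 < c := EuclideanSpace.apply_lt_of_norm_lt (hlt t) 2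
  have hξ' (t : ℝ) : deriv ξ t = c - deriv x t 2 := ((hv t).lightlike c 2).deriv
  have hξ'_ne (t : ℝ) : deriv ξ t ≠ 0 := (hξ' t).symm ▸ (sub_pos.2 (hv₂_lt t)).ne'
  have hmono : StrictMono ξ := strictMono_lightlike (hx.differentiable one_ne_zero) hlt 2
  have hξ_smooth : ContDiff ℝ 1 ξ :=
    (contDiff_const.mul contDiff_id).sub ((contDiff_piLp 2).1 hx 2)
  have htinv_smooth : ContDiffOn ℝ 1 (invFun ξ) (range ξ) :=
    hξ_smooth.contDiffOn_invFun_range one_ne_zero hmono.injective hξ'_ne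
  refine ⟨hmono, invFun ξ, leftInverse_invFun hmono.injective, htinv_smooth,
    hx.comp_contDiffOn htinv_smooth, fun t => ?_⟩
  have hxhat' : HasDerivAt (x ∘ invFun ξ) ((c - deriv x t 2)⁻¹ • deriv x t) (ξ t) :=
    hξ' t ▸ (hv t).comp_invFun (hξ_smooth.contDiffAt.hasStrictDerivAt one_ne_zero) (hξ'_ne t)
      hmono.injective
  have hxhat'_apply (i : Fin 3) : deriv (fun s => (x ∘ invFun ξ) s i) (c * t - x t 2)
      = (c - deriv x t 2)⁻¹ * deriv x t i :=
    (hxhat'.piLp_apply i).deriv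
  have hv₂ : deriv (fun s => x s 2) t = deriv x t 2 := ((hv t).piLp_apply 2).deriv
  have hlc : 0 < 1 - deriv x t 2 / c := sub_pos.2 ((div_lt_one hc).2 (hv₂_lt t))
  simp only [hv₂, hxhat'_apply]
  rw [lightlike_form_eq hc.ne' (hv₂_lt t).ne, Real.inv_div_sqrt_eq_sqrt_div_sq hlc.le]
  exact ⟨hxhat', rfl, div_pos (one_sub_norm_sq_div_sq_pos (hlt t)) (pow_pos hlc 2), rfl⟩
end

section
/- Let (x,p) be a C¹ solution of the Lorentz equations with continuous fields E, B. Let ξ(t) := ct − x³(t), t̂ its C¹ inverse on J = ξ(ℝ), and define on J the hatted variables x̂ := x ∘ t̂, û := (p/(mc)) ∘ t̂, γ̂ := √(1 + ‖û‖²), ŝ := γ̂ − û³, Ê(ξ) := E(t̂(ξ), x̂(ξ)), B̂(ξ) := B(t̂(ξ), x̂(ξ)). Then for all ξ ∈ J: (x̂ᵃ)'(ξ) = ûᵃ(ξ)/ŝ(ξ) for a = 1,2; (x̂³)'(ξ) = (1 + (û¹(ξ))² + (û²(ξ))²)/(2ŝ(ξ)²) − 1/2; (ûᵃ)'(ξ)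 = (q/(mc²ŝ(ξ)))·(γ̂(ξ)Ê(ξ) + û(ξ) × B̂(ξ))ᵃ for a = 1,2; and ŝ'(ξ) = (q/(mc²))·[(û¹Ê¹ + û²Ê²)(ξ)/ŝ(ξ) − Ê³(ξ) − (û¹B̂² − û²B̂¹)(ξ)/ŝ(ξ)]. -/
noncomputable section

/-- Squared Euclidean norm on `Fin 3 → ℝ`. -/
def sq3 (v : Fin 3 → ℝ) : ℝ := v 0 ^ 2 + v 1 ^ 2 + v 2 ^ 2

/-- Cross product on `Fin 3 → ℝ`. -/
def cross (a b : Fin 3 → ℝ) : Fin 3 → ℝ :=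
  ![a 1 * b 2 - a 2 * b 1, a 2 * b 0 - a 0 * b 2, a 0 * b 1 - a 1 * b 0]

/-- `(x, p)` is a C¹ solution of the Lorentz equations
`p' = qE + (p/√(m²c²+‖p‖²)) × qB`, `x' = c·p/√(m²c²+‖p‖²)`. -/
def IsLorentzSolution (m c q : ℝ) (E B : ℝ → (Fin 3 → ℝ) → (Fin 3 → ℝ))
    (x p : ℝ → Fin 3 → ℝ) : Prop :=
  ∀ t : ℝ,
    HasDerivAt p
      (q • E t (x t) +
        cross ((Real.sqrt (m ^ 2 * c ^ 2 + sq3 (p t)))⁻¹ • p t) (q • B t (x t))) t ∧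
    HasDerivAt x ((c / Real.sqrt (m ^ 2 * c ^ 2 + sq3 (p t))) • p t) t

/-- Position as a function of the light-like coordinate `ξ`. -/
def xhat (x : ℝ → Fin 3 → ℝ) (tinv : ℝ → ℝ) (ξ : ℝ) : Fin 3 → ℝ := x (tinv ξ)

/-- Dimensionless momentum `u = p/(mc)` as a function of `ξ`. -/
def uhat (m c : ℝ) (p : ℝ → Fin 3 → ℝ) (tinv : ℝ → ℝ) (ξ : ℝ) : Fin 3 → ℝ :=
  (m * c)⁻¹ • p (tinv ξ)

/-- Lorentz factor `γ = √(1+‖u‖²)` as a function of `ξ`. -/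
def gammahat (m c : ℝ) (p : ℝ → Fin 3 → ℝ) (tinv : ℝ → ℝ) (ξ : ℝ) : ℝ :=
  Real.sqrt (1 + sq3 (uhat m c p tinv ξ))

/-- Light-like relativistic factor `s = γ − u³` as a function of `ξ`. -/
def shat (m c : ℝ) (p : ℝ → Fin 3 → ℝ) (tinv : ℝ → ℝ) (ξ : ℝ) : ℝ :=
  gammahat m c p tinv ξ - uhat m c p tinv ξ 2

/-!
Along a solution, `dξ/dt = c - c u³/γ = c ŝ/γ̂ > 0` (as `γ > |u³|`), so by the inverse function
theorem `t̂' = γ̂/(c ŝ)` and every `ξ`-derivative is the `t`-derivative times `γ̂/(c ŝ)`. In terms of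
`u = p/(mc)` and `γ`, the Lorentz equations read `x' = (c/γ) u` and
`u' = q/(mcγ) (γE + u × B)`, which gives `x̂'` and `û'` at once. The formula for `(x̂³)'` is
`û³/ŝ` rewritten with `(γ - u³)(γ + u³) = 1 + (u¹)² + (u²)²`, and `ŝ' = û·û'/γ̂ - (û³)'`, in which
the magnetic field only enters through `(û × B̂)³` because `û·(û × B̂) = 0`.
-/

lemma sq3_smul (a : ℝ) (v : Fin 3 → ℝ) : sq3 (a • v) = a ^ 2 * sq3 v := by
  simp only [sq3, Pi.smul_apply, smul_eq_mul]; ring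

lemma lt_sqrt_one_add_sq3 (u : Fin 3 → ℝ) : u 2 < √(1 + sq3 u) := by
  refine Real.lt_sqrt_of_sq_lt ?_
  nlinarith [sq_nonneg (u 0), sq_nonneg (u 1), show sq3 u = u 0 ^ 2 + u 1 ^ 2 + u 2 ^ 2 from rfl]

lemma HasDerivAt.sq3_comp {u : ℝ → Fin 3 → ℝ} {u' : Fin 3 → ℝ} {ξ : ℝ} (hu : HasDerivAt u u' ξ) :
    HasDerivAt (fun η => sq3 (u η)) (2 * (u ξ ⬝ᵥ u')) ξ := by
  have hi (i : Fin 3) := hasDerivAt_pi.mp hu i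
  refine ((((hi 0).pow 2).add ((hi 1).pow 2)).add ((hi 2).pow 2)).congr_deriv ?_
  simp only [dotProduct, Fin.sum_univ_three]
  push_cast
  ring

lemma HasDerivAt.sqrt_one_add_sq3 {u : ℝ → Fin 3 → ℝ} {u' : Fin 3 → ℝ} {ξ : ℝ}
    (hu : HasDerivAt u u' ξ) :
    HasDerivAt (fun η => √(1 + sq3 (u η))) ((u ξ ⬝ᵥ u') / √(1 + sq3 (u ξ))) ξ := by
  have hpos : 0 < 1 + sq3 (u ξ) := by unfold sq3; positivity
  convert (hu.sq3_comp.const_add 1).sqrt hpos.ne' using 1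
  ring

lemma ContDiff.hasDerivAt_of_leftInverse {f g : ℝ → ℝ} {f' t : ℝ} (hf : ContDiff ℝ 1 f)
    (hft : HasDerivAt f f' t) (hf' : f' ≠ 0) (hg : ∀ s, g (f s) = s) :
    HasDerivAt g f'⁻¹ (f t) := by
  have hstrict : HasStrictDerivAt f f' t := by
    simpa only [hft.deriv] using (hf.contDiffAt (x := t)).hasStrictDerivAt one_ne_zero
  exact (hstrict.to_local_left_inverse hf' (.of_forall hg)).hasDerivAt

lemma div_sub_eq_of_sq_eq {u : Fin 3 → ℝ} {γ : ℝ} (hγ : γ ^ 2 = 1 + sq3 u) (hs : γ - u 2 ≠ 0) :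
    u 2 / (γ - u 2) = (1 + u 0 ^ 2 + u 1 ^ 2) / (2 * (γ - u 2) ^ 2) - 1 / 2 := by
  unfold sq3 at hγ
  field_simp
  linear_combination hγ

lemma gammahat_pos (m c : ℝ) (p : ℝ → Fin 3 → ℝ) (tinv : ℝ → ℝ) (ξ : ℝ) :
    0 < gammahat m c p tinv ξ :=
  Real.sqrt_pos.mpr (by unfold sq3; positivity)

lemma shat_pos (m c : ℝ) (p : ℝ → Fin 3 → ℝ) (tinv : ℝ → ℝ) (ξ : ℝ) :
    0 < shat m c p tinv ξ :=
  sub_pos.mpr (lt_sqrt_one_add_sq3 _)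

lemma sq_gammahat (m c : ℝ) (p : ℝ → Fin 3 → ℝ) (tinv : ℝ → ℝ) (ξ : ℝ) :
    gammahat m c p tinv ξ ^ 2 = 1 + sq3 (uhat m c p tinv ξ) :=
  Real.sq_sqrt (by unfold sq3; positivity)

section LightlikeTime

variable {m c q : ℝ} {E B : ℝ → (Fin 3 → ℝ) → (Fin 3 → ℝ)} {x p : ℝ → Fin 3 → ℝ}
  {tinv : ℝ → ℝ}

lemma uhat_lightlike (htinv : ∀ t, tinv (c * t - x t 2) = t) (t : ℝ) :
    uhat m c p tinv (c * t - x t 2) = (m * c)⁻¹ • p t := by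
  rw [uhat, htinv]

lemma sqrt_eq_mul_gammahat (hm : 0 < m) (hc : 0 < c) (htinv : ∀ t, tinv (c * t - x t 2) = t)
    (t : ℝ) :
    √(m ^ 2 * c ^ 2 + sq3 (p t)) = m * c * gammahat m c p tinv (c * t - x t 2) := by
  have hmc : 0 < m * c := mul_pos hm hc
  have hfactor : m ^ 2 * c ^ 2 + sq3 (p t) = (m * c) ^ 2 * (1 + (m * c)⁻¹ ^ 2 * sq3 (p t)) := by
    field_simp
  rw [gammahat, uhat_lightlike htinv, sq3_smul, hfactor, Real.sqrt_mul (sq_nonneg _),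
    Real.sqrt_sq hmc.le]

lemma IsLorentzSolution.hasDerivAt_position (hsol : IsLorentzSolution m c q E B x p)
    (hm : 0 < m) (hc : 0 < c) (htinv : ∀ t, tinv (c * t - x t 2) = t) (t : ℝ) :
    HasDerivAt x ((c / gammahat m c p tinv (c * t - x t 2)) •
      uhat m c p tinv (c * t - x t 2)) t := by
  refine (hsol t).2.congr_deriv ?_
  have := gammahat_pos m c p tinv (c * t - x t 2)
  rw [sqrt_eq_mul_gammahat hm hc htinv, uhat_lightlike htinv, smul_smul]
  congr 1
  field_simp

lemma IsLorentzSolution.hasDerivAt_momentum (hsol : IsLorentzSolution m c q E B x p)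
    (hm : 0 < m) (hc : 0 < c) (htinv : ∀ t, tinv (c * t - x t 2) = t) (t : ℝ) :
    HasDerivAt (fun s => (m * c)⁻¹ • p s)
      ((q / (m * c * gammahat m c p tinv (c * t - x t 2))) •
        (gammahat m c p tinv (c * t - x t 2) • E t (x t) +
          cross (uhat m c p tinv (c * t - x t 2)) (B t (x t)))) t := by
  refine ((hsol t).1.const_smul (m * c)⁻¹).congr_deriv ?_
  have := gammahat_pos m c p tinv (c * t - x t 2)
  rw [sqrt_eq_mul_gammahat hm hc htinv, uhat_lightlike htinv]
  ext i
  simp only [Pi.add_apply, Pi.smul_apply, smul_eq_mul]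
  fin_cases i <;>
  · simp only [cross, Pi.smul_apply, smul_eq_mul, Fin.isValue, Fin.zero_eta, Fin.mk_one,
      Fin.reduceFinMk, Matrix.cons_val_zero, Matrix.cons_val_one, Matrix.cons_val]
    field_simp

lemma IsLorentzSolution.hasDerivAt_lightlikeTime (hsol : IsLorentzSolution m c q E B x p)
    (hm : 0 < m) (hc : 0 < c) (htinv : ∀ t, tinv (c * t - x t 2) = t) (t : ℝ) :
    HasDerivAt (fun s => c * s - x s 2)
      (c * shat m c p tinv (c * t - x t 2) / gammahat m c p tinv (c * t - x t 2)) t := by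
  have hx := hasDerivAt_pi.mp (hsol.hasDerivAt_position hm hc htinv t) 2
  refine (((hasDerivAt_id t).const_mul c).sub hx).congr_deriv ?_
  have := gammahat_pos m c p tinv (c * t - x t 2)
  simp only [shat, Pi.smul_apply, smul_eq_mul]
  field_simp

lemma IsLorentzSolution.hasDerivAt_tinv (hsol : IsLorentzSolution m c q E B x p)
    (hm : 0 < m) (hc : 0 < c) (hxC : ContDiff ℝ 1 x) (htinv : ∀ t, tinv (c * t - x t 2) = t)
    (t : ℝ) :
    HasDerivAt tinv
      (gammahat m c p tinv (c * t - x t 2) / (c * shat m c p tinv (c * t - x t 2)))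
      (c * t - x t 2) := by
  have hξC : ContDiff ℝ 1 fun s => c * s - x s 2 :=
    (contDiff_const.mul contDiff_id).sub (contDiff_pi.mp hxC 2)
  have hs := shat_pos m c p tinv (c * t - x t 2)
  have hγ := gammahat_pos m c p tinv (c * t - x t 2)
  simpa only [inv_div] using
    hξC.hasDerivAt_of_leftInverse (hsol.hasDerivAt_lightlikeTime hm hc htinv t) (by positivity)
      htinv

lemma IsLorentzSolution.hasDerivAt_xhat (hsol : IsLorentzSolution m c q E B x p)
    (hm : 0 < m) (hc : 0 < c) (hxC : ContDiff ℝ 1 x) (htinv : ∀ t, tinv (c * t - x t 2) = t)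
    (t : ℝ) :
    HasDerivAt (xhat x tinv)
      ((shat m c p tinv (c * t - x t 2))⁻¹ • uhat m c p tinv (c * t - x t 2))
      (c * t - x t 2) := by
  have h := (hsol.hasDerivAt_position hm hc htinv t).scomp_of_eq (c * t - x t 2)
    (hsol.hasDerivAt_tinv hm hc hxC htinv t) (htinv t).symm
  refine h.congr_deriv ?_
  have hs := shat_pos m c p tinv (c * t - x t 2)
  have hγ := gammahat_pos m c p tinv (c * t - x t 2)
  rw [smul_smul]
  congr 1
  field_simp

lemma IsLorentzSolution.hasDerivAt_uhat (hsol : IsLorentzSolution m c q E B x p)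
    (hm : 0 < m) (hc : 0 < c) (hxC : ContDiff ℝ 1 x) (htinv : ∀ t, tinv (c * t - x t 2) = t)
    (t : ℝ) :
    HasDerivAt (uhat m c p tinv)
      ((q / (m * c ^ 2 * shat m c p tinv (c * t - x t 2))) •
        (gammahat m c p tinv (c * t - x t 2) • E t (x t) +
          cross (uhat m c p tinv (c * t - x t 2)) (B t (x t))))
      (c * t - x t 2) := by
  have h := (hsol.hasDerivAt_momentum hm hc htinv t).scomp_of_eq (c * t - x t 2)
    (hsol.hasDerivAt_tinv hm hc hxC htinv t) (htinv t).symm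
  refine h.congr_deriv ?_
  have hs := shat_pos m c p tinv (c * t - x t 2)
  have hγ := gammahat_pos m c p tinv (c * t - x t 2)
  rw [smul_smul]
  congr 1
  field_simp

lemma IsLorentzSolution.hasDerivAt_shat (hsol : IsLorentzSolution m c q E B x p)
    (hm : 0 < m) (hc : 0 < c) (hxC : ContDiff ℝ 1 x) (htinv : ∀ t, tinv (c * t - x t 2) = t)
    (t : ℝ) :
    HasDerivAt (shat m c p tinv)
      ((q / (m * c ^ 2)) *
        ((uhat m c p tinv (c * t - x t 2) 0 * E t (x t) 0 +
            uhat m c p tinv (c * t - x t 2) 1 * E t (x t) 1) / shat m c p tinv (c * t - x t 2) -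
          E t (x t) 2 -
          (uhat m c p tinv (c * t - x t 2) 0 * B t (x t) 1 -
            uhat m c p tinv (c * t - x t 2) 1 * B t (x t) 0) / shat m c p tinv (c * t - x t 2)))
      (c * t - x t 2) := by
  have hu := hsol.hasDerivAt_uhat hm hc hxC htinv t
  refine (hu.sqrt_one_add_sq3.sub (hasDerivAt_pi.mp hu 2)).congr_deriv ?_
  have hs := shat_pos m c p tinv (c * t - x t 2)
  have hγ := gammahat_pos m c p tinv (c * t - x t 2)
  change _ / gammahat m c p tinv (c * t - x t 2) - _ = _
  rw [shat] at hs ⊢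
  generalize gammahat m c p tinv (c * t - x t 2) = γ at *
  generalize uhat m c p tinv (c * t - x t 2) = u at *
  simp only [dotProduct, Fin.sum_univ_three, Pi.smul_apply, Pi.add_apply, smul_eq_mul, cross,
    Fin.isValue, Matrix.cons_val_zero, Matrix.cons_val_one, Matrix.cons_val]
  field_simp
  ring

end LightlikeTime

theorem stmt_3_general (m c q : ℝ) (hm : 0 < m) (hc : 0 < c)
    (E B : ℝ → (Fin 3 → ℝ) → (Fin 3 → ℝ))
    (x p : ℝ → Fin 3 → ℝ) (hxC : ContDiff ℝ 1 x)
    (hsol : IsLorentzSolution m c q E B x p)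
    (tinv : ℝ → ℝ) (htinv : ∀ t : ℝ, tinv (c * t - x t 2) = t) :
    ∀ t : ℝ,
      (∀ a : Fin 3, a = 0 ∨ a = 1 →
        HasDerivAt (fun η : ℝ => xhat x tinv η a)
          (uhat m c p tinv (c * t - x t 2) a / shat m c p tinv (c * t - x t 2))
          (c * t - x t 2)) ∧
      HasDerivAt (fun η : ℝ => xhat x tinv η 2)
        ((1 + (uhat m c p tinv (c * t - x t 2) 0) ^ 2
            + (uhat m c p tinv (c * t - x t 2) 1) ^ 2) /
          (2 * (shat m c p tinv (c * t - x t 2)) ^ 2) - 1 / 2)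
        (c * t - x t 2) ∧
      (∀ a : Fin 3, a = 0 ∨ a = 1 →
        HasDerivAt (fun η : ℝ => uhat m c p tinv η a)
          ((q / (m * c ^ 2 * shat m c p tinv (c * t - x t 2))) *
            ((gammahat m c p tinv (c * t - x t 2) •
                E (tinv (c * t - x t 2)) (xhat x tinv (c * t - x t 2)) +
              cross (uhat m c p tinv (c * t - x t 2))
                (B (tinv (c * t - x t 2)) (xhat x tinv (c * t - x t 2)))) a))
          (c * t - x t 2)) ∧
      HasDerivAt (shat m c p tinv)
        ((q / (m * c ^ 2)) *
          ((uhat m c p tinv (c * t - x t 2) 0 *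
              E (tinv (c * t - x t 2)) (xhat x tinv (c * t - x t 2)) 0 +
            uhat m c p tinv (c * t - x t 2) 1 *
              E (tinv (c * t - x t 2)) (xhat x tinv (c * t - x t 2)) 1) /
            shat m c p tinv (c * t - x t 2) -
           E (tinv (c * t - x t 2)) (xhat x tinv (c * t - x t 2)) 2 -
           (uhat m c p tinv (c * t - x t 2) 0 *
              B (tinv (c * t - x t 2)) (xhat x tinv (c * t - x t 2)) 1 -
            uhat m c p tinv (c * t - x t 2) 1 *
              B (tinv (c * t - x t 2)) (xhat x tinv (c * t - x t 2)) 0) /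
            shat m c p tinv (c * t - x t 2)))
        (c * t - x t 2) := by
  intro t
  have hxhat : xhat x tinv (c * t - x t 2) = x t := congrArg x (htinv t)
  rw [htinv t, hxhat]
  have hx := hasDerivAt_pi.mp (hsol.hasDerivAt_xhat hm hc hxC htinv t)
  have hu := hasDerivAt_pi.mp (hsol.hasDerivAt_uhat hm hc hxC htinv t)
  refine ⟨fun a _ => ?_, ?_, fun a _ => hu a, hsol.hasDerivAt_shat hm hc hxC htinv t⟩
  · simpa only [Pi.smul_apply, smul_eq_mul, inv_mul_eq_div] using hx a
  · refine (hx 2).congr_deriv ?_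
    rw [Pi.smul_apply, smul_eq_mul, inv_mul_eq_div]
    exact div_sub_eq_of_sq_eq (sq_gammahat m c p tinv _) (shat_pos m c p tinv _).ne'

/-- The Lorentz equations, rewritten with the light-like time
`ξ = ct − z`: `(x̂ᵃ)' = ûᵃ/ŝ` (a = 1,2), `(x̂³)' = (1+(û¹)²+(û²)²)/(2ŝ²) − 1/2`,
`(ûᵃ)' = (q/(mc²ŝ))·(γ̂Ê + û×B̂)ᵃ`, and
`ŝ' = (q/(mc²))·[(û¹Ê¹+û²Ê²)/ŝ − Ê³ − (û¹B̂²−û²B̂¹)/ŝ]`. -/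
theorem stmt_3 (m c q : ℝ) (hm : 0 < m) (hc : 0 < c)
    (E B : ℝ → (Fin 3 → ℝ) → (Fin 3 → ℝ))
    (hE : Continuous fun pt : ℝ × (Fin 3 → ℝ) => E pt.1 pt.2)
    (hB : Continuous fun pt : ℝ × (Fin 3 → ℝ) => B pt.1 pt.2)
    (x p : ℝ → Fin 3 → ℝ) (hxC : ContDiff ℝ 1 x) (hpC : ContDiff ℝ 1 p)
    (hsol : IsLorentzSolution m c q E B x p)
    (tinv : ℝ → ℝ) (htinv : ∀ t : ℝ, tinv (c * t - x t 2) = t) :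
    ∀ t : ℝ,
      (∀ a : Fin 3, a = 0 ∨ a = 1 →
        HasDerivAt (fun η : ℝ => xhat x tinv η a)
          (uhat m c p tinv (c * t - x t 2) a / shat m c p tinv (c * t - x t 2))
          (c * t - x t 2)) ∧
      HasDerivAt (fun η : ℝ => xhat x tinv η 2)
        ((1 + (uhat m c p tinv (c * t - x t 2) 0) ^ 2
            + (uhat m c p tinv (c * t - x t 2) 1) ^ 2) /
          (2 * (shat m c p tinv (c * t - x t 2)) ^ 2) - 1 / 2)
        (c * t - x t 2) ∧
      (∀ a : Fin 3, a = 0 ∨ a = 1 →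
        HasDerivAt (fun η : ℝ => uhat m c p tinv η a)
          ((q / (m * c ^ 2 * shat m c p tinv (c * t - x t 2))) *
            ((gammahat m c p tinv (c * t - x t 2) •
                E (tinv (c * t - x t 2)) (xhat x tinv (c * t - x t 2)) +
              cross (uhat m c p tinv (c * t - x t 2))
                (B (tinv (c * t - x t 2)) (xhat x tinv (c * t - x t 2)))) a))
          (c * t - x t 2)) ∧
      HasDerivAt (shat m c p tinv)
        ((q / (m * c ^ 2)) *
          ((uhat m c p tinv (c * t - x t 2) 0 *
              E (tinv (c * t - x t 2)) (xhat x tinv (c * t - x t 2)) 0 +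
            uhat m c p tinv (c * t - x t 2) 1 *
              E (tinv (c * t - x t 2)) (xhat x tinv (c * t - x t 2)) 1) /
            shat m c p tinv (c * t - x t 2) -
           E (tinv (c * t - x t 2)) (xhat x tinv (c * t - x t 2)) 2 -
           (uhat m c p tinv (c * t - x t 2) 0 *
              B (tinv (c * t - x t 2)) (xhat x tinv (c * t - x t 2)) 1 -
            uhat m c p tinv (c * t - x t 2) 1 *
              B (tinv (c * t - x t 2)) (xhat x tinv (c * t - x t 2)) 0) /
            shat m c p tinv (c * t - x t 2)))
        (c * t - x t 2) :=
  stmt_3_general m c q hm hc E B x p hxC hsol tinv htinv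
end
end

section
/- Let the electromagnetic field have the split form E(t,x) = ε⊥(ct − x³) + E_s, B(t,x) = k × ε⊥(ct − x³) + B_s, where E_s, B_s ∈ ℝ³ are constant vectors and ε⊥ : ℝ → ℝ³ is continuous, integrable, and has vanishing third component; set α⊥(ξ) := −∫_{−∞}^{ξ} ε⊥(ζ)dζ. Let (x,p) be a C¹ solution of the Lorentz equations with ξ-parametrized variables x̂, û, ŝ. Then the following three functions of ξ are constant on the range of ξ(t) = ct − x³(t): ûᵃ(ξ) − (q/(mc²))·[−αᵃ(ξ) + (ξ + x̂³(ξ))·E_sᵃ + (x̂(ξ) × B_s)ᵃ] for a = 1,2, and ŝ(ξ) + (q/(mc²))·[ξ·E_s³ − x̂¹(ξ)E_s¹ − x̂²(ξ)E_s² + x̂¹(ξ)B_s² − x̂²(ξ)B_s¹]. -/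
noncomputable section

/-! In the light-cone variable `ξ = ct − x³` the wave force on the transverse momentum is an exact
derivative: since `ε³ = 0` and the magnetic part of the wave is `k × ε`, its transverse component is
`q ε(ξ) (1 − v³/c) = (q/c) ε(ξ) dξ/dt = −(q/c) d(α ∘ ξ)/dt`, while the static fields contribute
`q (E_s + v × B_s / c)`, the time derivative of `q (ct E_s + x × B_s) / c`, and `ct = ξ + x³`.
For `s = γ − u³`, the energy balance `d(γmc²)/dt = q v·E` (magnetic forces do no work) makes the
wave contributions to `γ` and to `u³` cancel. So all three quantities have vanishing time
derivative. -/

open MeasureTheory Set Matrix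

theorem cross_eq_crossProduct (a b : Fin 3 → ℝ) : cross a b = a ⨯₃ b :=
  (cross_apply a b).symm

theorem HasDerivAt.cross_const {f : ℝ → Fin 3 → ℝ} {f' : Fin 3 → ℝ} {t : ℝ}
    (hf : HasDerivAt f f' t) (b : Fin 3 → ℝ) :
    HasDerivAt (fun s => cross (f s) b) (cross f' b) t := by
  have h := hasDerivAt_pi.1 hf
  refine hasDerivAt_pi.2 fun i => ?_
  fin_cases i <;> simp only [cross, Fin.zero_eta, Fin.mk_one, Fin.reduceFinMk,
    cons_val_zero, cons_val_one, cons_val_two] <;>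
    exact ((h _).mul_const _).sub ((h _).mul_const _)

theorem HasDerivAt.sq3 {f : ℝ → Fin 3 → ℝ} {f' : Fin 3 → ℝ} {t : ℝ}
    (hf : HasDerivAt f f' t) :
    HasDerivAt (fun s => sq3 (f s)) (2 * (f t ⬝ᵥ f')) t := by
  have h := hasDerivAt_pi.1 hf
  refine ((((h 0).pow 2).add ((h 1).pow 2)).add ((h 2).pow 2)).congr_deriv ?_
  simp only [dotProduct, Fin.sum_univ_three]
  ring

theorem hasDerivAt_integral_Iic {E : Type*} [NormedAddCommGroup E] [NormedSpace ℝ E]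
    [CompleteSpace E] {f : ℝ → E} (hf : Continuous f) (hfi : Integrable f) (r : ℝ) :
    HasDerivAt (fun s => ∫ ζ in Iic s, f ζ) (f r) r := by
  have hsplit : (fun s => ∫ ζ in Iic s, f ζ) =
      fun s => (∫ ζ in Iic 0, f ζ) + ∫ ζ in 0..s, f ζ := by
    funext s
    rw [← intervalIntegral.integral_Iic_sub_Iic hfi.integrableOn hfi.integrableOn,
      add_sub_cancel]
  rw [hsplit]
  exact (intervalIntegral.integral_hasDerivAt_right hfi.intervalIntegrable
    hf.stronglyMeasurable.stronglyMeasurableAtFilter hf.continuousAt).const_add _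

theorem eq_of_forall_hasDerivAt_zero {f : ℝ → ℝ} (hf : ∀ t, HasDerivAt f 0 t) (t₁ t₂ : ℝ) :
    f t₁ = f t₂ :=
  is_const_of_deriv_eq_zero (fun t => (hf t).differentiableAt) (fun t => (hf t).deriv) t₁ t₂

/-- The time component `γmc` of the four-momentum. -/
def fourMomentumTime (m c : ℝ) (p : Fin 3 → ℝ) : ℝ := √(m ^ 2 * c ^ 2 + sq3 p)

theorem sq3_nonneg (v : Fin 3 → ℝ) : 0 ≤ sq3 v := by
  unfold sq3; positivity

theorem fourMomentumTime_pos {m c : ℝ} (hmc : m * c ≠ 0) (p : Fin 3 → ℝ) :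
    0 < fourMomentumTime m c p :=
  Real.sqrt_pos.2 (by nlinarith [mul_self_pos.2 hmc, sq3_nonneg p])

theorem sqrt_one_add_sq3_smul {m c : ℝ} (hmc : 0 < m * c) (p : Fin 3 → ℝ) :
    √(1 + sq3 ((m * c)⁻¹ • p)) = fourMomentumTime m c p / (m * c) := by
  have h : m ^ 2 * c ^ 2 + sq3 p = (m * c) ^ 2 * (1 + sq3 ((m * c)⁻¹ • p)) := by
    obtain ⟨hm, hc⟩ := mul_ne_zero_iff.1 hmc.ne'
    simp only [sq3, Pi.smul_apply, smul_eq_mul]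
    field_simp
  rw [fourMomentumTime, h, Real.sqrt_mul (sq_nonneg _), Real.sqrt_sq hmc.le,
    mul_div_cancel_left₀ _ hmc.ne']

namespace IsLorentzSolution

variable {m c q : ℝ} {E B : ℝ → (Fin 3 → ℝ) → Fin 3 → ℝ} {x p : ℝ → Fin 3 → ℝ}

theorem hasDerivAt_coord (hsol : IsLorentzSolution m c q E B x p) (t : ℝ) (a : Fin 3) :
    HasDerivAt (fun s => x s a) (c / fourMomentumTime m c (p t) * p t a) t :=
  hasDerivAt_pi.1 (hsol t).2 a

theorem hasDerivAt_lightCone (hsol : IsLorentzSolution m c q E B x p) (t : ℝ) :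
    HasDerivAt (fun s => c * s - x s 2) (c - c / fourMomentumTime m c (p t) * p t 2) t :=
  (((hasDerivAt_id t).const_mul c).sub (hsol.hasDerivAt_coord t 2)).congr_deriv (by simp)

theorem hasDerivAt_fourMomentumTime (hsol : IsLorentzSolution m c q E B x p)
    (hmc : m * c ≠ 0) (t : ℝ) :
    HasDerivAt (fun s => fourMomentumTime m c (p s))
      (q * (p t ⬝ᵥ E t (x t)) / fourMomentumTime m c (p t)) t := by
  have hW := fourMomentumTime_pos hmc (p t)
  refine (((hsol t).1.sq3.const_add (m ^ 2 * c ^ 2)).sqrt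
    (Real.sqrt_pos.1 hW).ne').congr_deriv ?_
  rw [cross_eq_crossProduct, LinearMap.map_smul₂, dotProduct_add, dotProduct_smul,
    dotProduct_smul, dot_self_cross, smul_zero, add_zero, smul_eq_mul, fourMomentumTime,
    mul_div_mul_left _ _ two_ne_zero]

end IsLorentzSolution

def planeWaveE (c : ℝ) (eps : ℝ → Fin 3 → ℝ) (Es : Fin 3 → ℝ) (t : ℝ) (y : Fin 3 → ℝ) :
    Fin 3 → ℝ :=
  eps (c * t - y 2) + Es

def planeWaveB (c : ℝ) (eps : ℝ → Fin 3 → ℝ) (Bs : Fin 3 → ℝ) (t : ℝ) (y : Fin 3 → ℝ) :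
    Fin 3 → ℝ :=
  cross ![0, 0, 1] (eps (c * t - y 2)) + Bs

namespace IsLorentzSolution

variable {m c q : ℝ} {eps : ℝ → Fin 3 → ℝ} {Es Bs : Fin 3 → ℝ} {x p : ℝ → Fin 3 → ℝ}

theorem hasDerivAt_transverseInvariant
    (hsol : IsLorentzSolution m c q (planeWaveE c eps Es) (planeWaveB c eps Bs) x p)
    (hm : m ≠ 0) (hc : c ≠ 0) (hepsz : ∀ ξ, eps ξ 2 = 0) {alpha : ℝ → Fin 3 → ℝ}
    (halpha : ∀ ξ, HasDerivAt alpha (-eps ξ) ξ) {a : Fin 3} (ha : a = 0 ∨ a = 1) (t : ℝ) :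
    HasDerivAt (fun t => (m * c)⁻¹ * p t a - q / (m * c ^ 2) *
      (-alpha (c * t - x t 2) a + ((c * t - x t 2) + x t 2) * Es a + cross (x t) Bs a)) 0 t := by
  have hW := (fourMomentumTime_pos (mul_ne_zero hm hc) (p t)).ne'
  have hξ := hsol.hasDerivAt_lightCone t
  have hα := hasDerivAt_pi.1 ((halpha (c * t - x t 2)).scomp t hξ) a
  have hx := hasDerivAt_pi.1 (hsol t).2
  have hcross := hasDerivAt_pi.1 ((hsol t).2.cross_const Bs) a
  refine (((hasDerivAt_pi.1 (hsol t).1 a).const_mul _).sub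
    (((hα.neg.add ((hξ.add (hx 2)).mul_const _)).add hcross).const_mul _)).congr_deriv ?_
  rcases ha with rfl | rfl <;>
  · simp only [planeWaveE, planeWaveB, cross, fourMomentumTime, Pi.add_apply, Pi.smul_apply,
      Pi.neg_apply, smul_eq_mul, cons_val_zero, cons_val_one, cons_val_two, head_cons, tail_cons,
      hepsz] at hW ⊢
    field_simp
    ring

theorem hasDerivAt_longitudinalInvariant
    (hsol : IsLorentzSolution m c q (planeWaveE c eps Es) (planeWaveB c eps Bs) x p)
    (hmc : 0 < m * c) (hepsz : ∀ ξ, eps ξ 2 = 0) (t : ℝ) :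
    HasDerivAt (fun t => √(1 + sq3 ((m * c)⁻¹ • p t)) - (m * c)⁻¹ * p t 2 + q / (m * c ^ 2) *
      ((c * t - x t 2) * Es 2 - x t 0 * Es 0 - x t 1 * Es 1 + x t 0 * Bs 1 - x t 1 * Bs 0))
      0 t := by
  simp only [sqrt_one_add_sq3_smul hmc]
  have hW := (fourMomentumTime_pos hmc.ne' (p t)).ne'
  have hx := hsol.hasDerivAt_coord t
  have hγ := (hsol.hasDerivAt_fourMomentumTime hmc.ne' t).div_const (m * c)
  have hu := (hasDerivAt_pi.1 (hsol t).1 2).const_mul (m * c)⁻¹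
  have hpot := (((((hsol.hasDerivAt_lightCone t).mul_const (Es 2)).sub
    ((hx 0).mul_const (Es 0))).sub ((hx 1).mul_const (Es 1))).add
    ((hx 0).mul_const (Bs 1))).sub ((hx 1).mul_const (Bs 0))
  refine ((hγ.sub hu).add (hpot.const_mul (q / (m * c ^ 2)))).congr_deriv ?_
  obtain ⟨hm, hc⟩ := mul_ne_zero_iff.1 hmc.ne'
  simp only [planeWaveE, planeWaveB, cross, fourMomentumTime, dotProduct, Fin.sum_univ_three,
    Pi.add_apply, Pi.smul_apply, smul_eq_mul, cons_val_zero, cons_val_one, cons_val_two,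
    head_cons, tail_cons, hepsz] at hW ⊢
  field_simp
  ring

end IsLorentzSolution

theorem stmt_6_general (m c q : ℝ) (hm : 0 < m) (hc : 0 < c)
    (eps : ℝ → Fin 3 → ℝ) (heps : Continuous eps) (hepsi : Integrable eps)
    (hepsz : ∀ ξ : ℝ, eps ξ 2 = 0)
    (Es Bs : Fin 3 → ℝ)
    (E B : ℝ → (Fin 3 → ℝ) → (Fin 3 → ℝ))
    (hE : ∀ (t : ℝ) (y : Fin 3 → ℝ), E t y = eps (c * t - y 2) + Es)
    (hB : ∀ (t : ℝ) (y : Fin 3 → ℝ),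
      B t y = cross ![0, 0, 1] (eps (c * t - y 2)) + Bs)
    (x p : ℝ → Fin 3 → ℝ)
    (hsol : IsLorentzSolution m c q E B x p)
    (tinv : ℝ → ℝ) (htinv : ∀ t : ℝ, tinv (c * t - x t 2) = t)
    (alpha : ℝ → Fin 3 → ℝ)
    (halpha : ∀ ξ : ℝ, alpha ξ = -∫ ζ in Set.Iic ξ, eps ζ) :
    ∀ t₁ t₂ : ℝ,
      (∀ a : Fin 3, a = 0 ∨ a = 1 →
        uhat m c p tinv (c * t₁ - x t₁ 2) a -
          (q / (m * c ^ 2)) *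
            (-alpha (c * t₁ - x t₁ 2) a +
              ((c * t₁ - x t₁ 2) + xhat x tinv (c * t₁ - x t₁ 2) 2) * Es a +
              cross (xhat x tinv (c * t₁ - x t₁ 2)) Bs a) =
        uhat m c p tinv (c * t₂ - x t₂ 2) a -
          (q / (m * c ^ 2)) *
            (-alpha (c * t₂ - x t₂ 2) a +
              ((c * t₂ - x t₂ 2) + xhat x tinv (c * t₂ - x t₂ 2) 2) * Es a +
              cross (xhat x tinv (c * t₂ - x t₂ 2)) Bs a)) ∧
      shat m c p tinv (c * t₁ - x t₁ 2) +
          (q / (m * c ^ 2)) *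
            ((c * t₁ - x t₁ 2) * Es 2 -
              xhat x tinv (c * t₁ - x t₁ 2) 0 * Es 0 -
              xhat x tinv (c * t₁ - x t₁ 2) 1 * Es 1 +
              xhat x tinv (c * t₁ - x t₁ 2) 0 * Bs 1 -
              xhat x tinv (c * t₁ - x t₁ 2) 1 * Bs 0) =
        shat m c p tinv (c * t₂ - x t₂ 2) +
          (q / (m * c ^ 2)) *
            ((c * t₂ - x t₂ 2) * Es 2 -
              xhat x tinv (c * t₂ - x t₂ 2) 0 * Es 0 -
              xhat x tinv (c * t₂ - x t₂ 2) 1 * Es 1 +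
              xhat x tinv (c * t₂ - x t₂ 2) 0 * Bs 1 -
              xhat x tinv (c * t₂ - x t₂ 2) 1 * Bs 0) := by
  obtain rfl : E = planeWaveE c eps Es := funext fun t => funext (hE t)
  obtain rfl : B = planeWaveB c eps Bs := funext fun t => funext (hB t)
  obtain rfl : alpha = fun ξ => -∫ ζ in Set.Iic ξ, eps ζ := funext halpha
  have hα ξ := (hasDerivAt_integral_Iic heps hepsi ξ).neg
  intro t₁ t₂
  simp only [shat, gammahat, uhat, xhat, htinv, Pi.smul_apply, smul_eq_mul]
  exact ⟨fun a ha => eq_of_forall_hasDerivAt_zero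
      (hsol.hasDerivAt_transverseInvariant hm.ne' hc.ne' hepsz hα ha) t₁ t₂,
    eq_of_forall_hasDerivAt_zero
      (hsol.hasDerivAt_longitudinalInvariant (mul_pos hm hc) hepsz) t₁ t₂⟩

/-- For `E = ε⊥(ct−z) + E_s`, `B = k×ε⊥(ct−z) + B_s` with
*constant* static fields and `α⊥(ξ) = −∫_{−∞}^ξ ε⊥`, the quantities
`ûᵃ − (q/(mc²))[−αᵃ + (ξ+x̂³)E_sᵃ + (x̂×B_s)ᵃ]` (a = 1,2) and
`ŝ + (q/(mc²))[ξE_s³ − x̂¹E_s¹ − x̂²E_s² + x̂¹B_s² − x̂²B_s¹]`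
are constant along the motion. -/
theorem stmt_6 (m c q : ℝ) (hm : 0 < m) (hc : 0 < c)
    (eps : ℝ → Fin 3 → ℝ) (heps : Continuous eps) (hepsi : Integrable eps)
    (hepsz : ∀ ξ : ℝ, eps ξ 2 = 0)
    (Es Bs : Fin 3 → ℝ)
    (E B : ℝ → (Fin 3 → ℝ) → (Fin 3 → ℝ))
    (hE : ∀ (t : ℝ) (y : Fin 3 → ℝ), E t y = eps (c * t - y 2) + Es)
    (hB : ∀ (t : ℝ) (y : Fin 3 → ℝ),
      B t y = cross ![0, 0, 1] (eps (c * t - y 2)) + Bs)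
    (x p : ℝ → Fin 3 → ℝ) (hxC : ContDiff ℝ 1 x) (hpC : ContDiff ℝ 1 p)
    (hsol : IsLorentzSolution m c q E B x p)
    (tinv : ℝ → ℝ) (htinv : ∀ t : ℝ, tinv (c * t - x t 2) = t)
    (alpha : ℝ → Fin 3 → ℝ)
    (halpha : ∀ ξ : ℝ, alpha ξ = -∫ ζ in Set.Iic ξ, eps ζ) :
    ∀ t₁ t₂ : ℝ,
      (∀ a : Fin 3, a = 0 ∨ a = 1 →
        uhat m c p tinv (c * t₁ - x t₁ 2) a -
          (q / (m * c ^ 2)) *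
            (-alpha (c * t₁ - x t₁ 2) a +
              ((c * t₁ - x t₁ 2) + xhat x tinv (c * t₁ - x t₁ 2) 2) * Es a +
              cross (xhat x tinv (c * t₁ - x t₁ 2)) Bs a) =
        uhat m c p tinv (c * t₂ - x t₂ 2) a -
          (q / (m * c ^ 2)) *
            (-alpha (c * t₂ - x t₂ 2) a +
              ((c * t₂ - x t₂ 2) + xhat x tinv (c * t₂ - x t₂ 2) 2) * Es a +
              cross (xhat x tinv (c * t₂ - x t₂ 2)) Bs a)) ∧
      shat m c p tinv (c * t₁ - x t₁ 2) +
          (q / (m * c ^ 2)) *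
            ((c * t₁ - x t₁ 2) * Es 2 -
              xhat x tinv (c * t₁ - x t₁ 2) 0 * Es 0 -
              xhat x tinv (c * t₁ - x t₁ 2) 1 * Es 1 +
              xhat x tinv (c * t₁ - x t₁ 2) 0 * Bs 1 -
              xhat x tinv (c * t₁ - x t₁ 2) 1 * Bs 0) =
        shat m c p tinv (c * t₂ - x t₂ 2) +
          (q / (m * c ^ 2)) *
            ((c * t₂ - x t₂ 2) * Es 2 -
              xhat x tinv (c * t₂ - x t₂ 2) 0 * Es 0 -
              xhat x tinv (c * t₂ - x t₂ 2) 1 * Es 1 +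
              xhat x tinv (c * t₂ - x t₂ 2) 0 * Bs 1 -
              xhat x tinv (c * t₂ - x t₂ 2) 1 * Bs 0) :=
  stmt_6_general m c q hm hc eps heps hepsi hepsz Es Bs E B hE hB x p hsol tinv htinv alpha halpha
end
end

section
/- Let ε₀ : ℝ → ℝ be C² with ε₀, ε₀', ε₀'' ∈ L¹(ℝ) and ε₀' bounded, and let k ≠ 0. For η > 0 define I(η) := ∫_ℝ ε₀(ξ/η)·e^{ikξ} dξ. Then |I(η)| ≤ (sup_ℝ |ε₀'| + ∫_ℝ |ε₀''|)/(η·k²); in particular I(η) → 0 as η → ∞. Consequently, for the modulated monochromatic pump ε⊥(ξ) = ε₀(ξ/η)·(a₁cos(kξ+φ₁), a₂sin(kξ+φ₂)) (a₁,a₂,φ₁,φ₂ ∈ ℝ), the final transverse momentum u_f⊥(η) = (q/(mc²))·∫_ℝ ε⊥(ξ)dξ of a charged particle initially at rest, and its final energy gain 𝓔_f(η) = ‖u_f⊥(η)‖²/2, both tend to 0 as η → ∞ (generalized Lawson–Woodward theorem: no net acceleration by a slowly modulated plane travelling wave in vacuum with zero static fields). -/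
/-!
Integration by parts on the line, in the Fourier form `𝓕 f' = 2πiw • 𝓕 f`, applied twice gives
`k² ‖∫ f e^{ikx}‖ ≤ ∫ ‖f''‖`. For `f ξ = ε₀ (ξ / η)` every derivative brings a factor `η⁻¹` while
the change of variables `ξ = η x` brings back one factor `η`, so `‖I(η)‖ ≤ ∫ |ε₀''| / (η k²)`.
Each component of `∫ ε⊥` is `a₁` or `a₂` times the real or imaginary part of
`e^{iφ} ∫ ε₀(ξ/η) e^{ikξ}`, so `u_f⊥(η)` and `𝓔_f(η)` are controlled by `‖I(η)‖`.
-/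

open MeasureTheory Filter Complex Real FourierTransform

lemma integral_mul_cexp_eq_fourier (f : ℝ → ℂ) (k : ℝ) :
    ∫ x : ℝ, f x * cexp (I * k * x) = 𝓕 f (-(k / (2 * π))) := by
  rw [Real.fourier_real_eq_integral_exp_smul]
  congr 1 with x
  rw [smul_eq_mul, mul_comm]
  congr 2
  push_cast
  field_simp

lemma norm_integral_deriv_mul_cexp {f : ℝ → ℂ} (hf : Integrable f) (hd : Differentiable ℝ f)
    (hf' : Integrable (deriv f)) (k : ℝ) :
    ‖∫ x : ℝ, deriv f x * cexp (I * k * x)‖ = |k| * ‖∫ x : ℝ, f x * cexp (I * k * x)‖ := by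
  rw [integral_mul_cexp_eq_fourier, integral_mul_cexp_eq_fourier, Real.fourier_deriv hf hd hf',
    norm_smul]
  congr 1
  have : 2 * (π : ℂ) * I * ((-(k / (2 * π)) : ℝ) : ℂ) = -(k * I) := by
    push_cast
    field_simp
  rw [this, norm_neg, norm_mul, norm_I, mul_one, norm_real, Real.norm_eq_abs]

lemma sq_mul_norm_integral_mul_cexp_le {f : ℝ → ℂ} (hd : Differentiable ℝ f)
    (hd' : Differentiable ℝ (deriv f)) (hf : Integrable f) (hf' : Integrable (deriv f))
    (hf'' : Integrable (deriv (deriv f))) (k : ℝ) :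
    k ^ 2 * ‖∫ x : ℝ, f x * cexp (I * k * x)‖ ≤ ∫ x : ℝ, ‖deriv (deriv f) x‖ :=
  calc k ^ 2 * ‖∫ x : ℝ, f x * cexp (I * k * x)‖
      = ‖∫ x : ℝ, deriv (deriv f) x * cexp (I * k * x)‖ := by
        rw [norm_integral_deriv_mul_cexp hf' hd' hf'', norm_integral_deriv_mul_cexp hf hd hf',
          ← mul_assoc, ← sq, sq_abs]
    _ ≤ ∫ x : ℝ, ‖deriv (deriv f) x * cexp (I * k * x)‖ := norm_integral_le_integral_norm _
    _ = ∫ x : ℝ, ‖deriv (deriv f) x‖ := by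
        simp [norm_exp]

lemma deriv_ofReal_comp {g : ℝ → ℝ} (hg : Differentiable ℝ g) :
    deriv (fun x => (g x : ℂ)) = fun x => ((deriv g x : ℝ) : ℂ) :=
  funext fun x => (hg x).hasDerivAt.ofReal_comp.deriv

lemma deriv_comp_div_const (g : ℝ → ℝ) (η : ℝ) :
    deriv (fun x => g (x / η)) = fun x => η⁻¹ * deriv g (x / η) := by
  simp_rw [div_eq_inv_mul]
  exact funext fun x => deriv_comp_mul_left η⁻¹ g x

lemma sq_mul_norm_integral_ofReal_mul_cexp_le {g : ℝ → ℝ} (hg : ContDiff ℝ 2 g)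
    (h0 : Integrable g) (h1 : Integrable (deriv g)) (h2 : Integrable (deriv (deriv g))) (k : ℝ) :
    k ^ 2 * ‖∫ x : ℝ, (g x : ℂ) * cexp (I * k * x)‖ ≤ ∫ x : ℝ, |deriv (deriv g) x| := by
  obtain ⟨hd, -, hg'⟩ := (contDiff_succ_iff_deriv (n := 1)).mp hg
  have hd' : Differentiable ℝ (deriv g) := hg'.differentiable one_ne_zero
  have hc1 := deriv_ofReal_comp hd
  have hc2 : deriv (deriv fun x => (g x : ℂ)) = fun x => ((deriv (deriv g) x : ℝ) : ℂ) := by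
    rw [hc1, deriv_ofReal_comp hd']
  have key := sq_mul_norm_integral_mul_cexp_le (f := fun x => (g x : ℂ))
    (ofRealCLM.differentiable.comp hd)
    (by rw [hc1]; exact ofRealCLM.differentiable.comp hd') h0.ofReal
    (by rw [hc1]; exact h1.ofReal) (by rw [hc2]; exact h2.ofReal) k
  simpa only [hc2, norm_real, Real.norm_eq_abs] using key

lemma norm_integral_comp_div_mul_cexp_le {g : ℝ → ℝ} (hg : ContDiff ℝ 2 g)
    (h0 : Integrable g) (h1 : Integrable (deriv g)) (h2 : Integrable (deriv (deriv g)))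
    {k η : ℝ} (hk : k ≠ 0) (hη : 0 < η) :
    ‖∫ ξ : ℝ, (g (ξ / η) : ℂ) * cexp (I * k * ξ)‖
      ≤ (∫ x : ℝ, |deriv (deriv g) x|) / (η * k ^ 2) := by
  have hd1 : deriv (fun ξ => g (ξ / η)) = fun ξ => η⁻¹ * deriv g (ξ / η) :=
    deriv_comp_div_const g η
  have hd2 : deriv (deriv fun ξ => g (ξ / η))
      = fun ξ => η⁻¹ * (η⁻¹ * deriv (deriv g) (ξ / η)) := by
    rw [hd1, deriv_const_mul_field', deriv_comp_div_const]
  have hgη : ContDiff ℝ 2 fun ξ => g (ξ / η) := hg.comp (contDiff_id.div_const η)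
  have key := sq_mul_norm_integral_ofReal_mul_cexp_le hgη (h0.comp_div hη.ne')
    (by rw [hd1]; exact (h1.comp_div hη.ne').const_mul _)
    (by rw [hd2]; exact ((h2.comp_div hη.ne').const_mul _).const_mul _) k
  have hint : ∫ ξ : ℝ, |deriv (deriv fun ξ => g (ξ / η)) ξ|
      = η⁻¹ * ∫ x : ℝ, |deriv (deriv g) x| := by
    simp only [hd2, abs_mul, abs_inv, abs_of_pos hη, integral_const_mul,
      Measure.integral_comp_div (fun x => |deriv (deriv g) x|), smul_eq_mul]
    field_simp
  rw [hint] at key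
  rw [le_div_iff₀ (by positivity)]
  calc _ = η * (k ^ 2 * ‖∫ ξ : ℝ, (g (ξ / η) : ℂ) * cexp (I * k * ξ)‖) := by ring
    _ ≤ η * (η⁻¹ * ∫ x : ℝ, |deriv (deriv g) x|) := by gcongr
    _ = _ := mul_inv_cancel_left₀ hη.ne' _

section CosSin

variable {g : ℝ → ℝ} (k φ : ℝ)

lemma integrable_ofReal_mul_cexp_affine (hg : Integrable g) :
    Integrable fun x : ℝ => (g x : ℂ) * cexp (((k * x + φ : ℝ) : ℂ) * I) :=
  hg.ofReal.mul_bdd (by fun_prop) (ae_of_all _ fun x => (norm_exp_ofReal_mul_I _).le)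

lemma norm_integral_ofReal_mul_cexp_affine :
    ‖∫ x : ℝ, (g x : ℂ) * cexp (((k * x + φ : ℝ) : ℂ) * I)‖
      = ‖∫ x : ℝ, (g x : ℂ) * cexp (I * k * x)‖ := by
  have : ∀ x : ℝ, (g x : ℂ) * cexp (((k * x + φ : ℝ) : ℂ) * I)
      = (g x : ℂ) * cexp (I * k * x) * cexp (φ * I) := fun x => by
    rw [mul_assoc, ← Complex.exp_add]; push_cast; ring_nf
  simp_rw [this, integral_mul_const, norm_mul, norm_exp_ofReal_mul_I, mul_one]

lemma abs_integral_mul_cos_le (hg : Integrable g) :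
    |∫ x : ℝ, g x * Real.cos (k * x + φ)| ≤ ‖∫ x : ℝ, (g x : ℂ) * cexp (I * k * x)‖ := by
  have : ∫ x : ℝ, g x * Real.cos (k * x + φ)
      = (∫ x : ℝ, (g x : ℂ) * cexp (((k * x + φ : ℝ) : ℂ) * I)).re := by
    rw [← RCLike.re_to_complex, ← integral_re (integrable_ofReal_mul_cexp_affine k φ hg)]
    simp only [RCLike.re_to_complex, re_ofReal_mul, exp_ofReal_mul_I_re]
  rw [this, ← norm_integral_ofReal_mul_cexp_affine k φ]
  exact abs_re_le_norm _

lemma abs_integral_mul_sin_le (hg : Integrable g) :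
    |∫ x : ℝ, g x * Real.sin (k * x + φ)| ≤ ‖∫ x : ℝ, (g x : ℂ) * cexp (I * k * x)‖ := by
  have : ∫ x : ℝ, g x * Real.sin (k * x + φ)
      = (∫ x : ℝ, (g x : ℂ) * cexp (((k * x + φ : ℝ) : ℂ) * I)).im := by
    rw [← RCLike.im_to_complex, ← integral_im (integrable_ofReal_mul_cexp_affine k φ hg)]
    simp only [RCLike.im_to_complex, im_ofReal_mul, exp_ofReal_mul_I_im]
  rw [this, ← norm_integral_ofReal_mul_cexp_affine k φ]
  exact abs_im_le_norm _

end CosSin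

lemma EuclideanSpace.norm_le_abs_add_abs (v : EuclideanSpace ℝ (Fin 2)) : ‖v‖ ≤ |v 0| + |v 1| := by
  rw [EuclideanSpace.norm_eq, Fin.sum_univ_two, Real.norm_eq_abs, Real.norm_eq_abs,
    Real.sqrt_le_left (by positivity)]
  nlinarith [abs_nonneg (v 0), abs_nonneg (v 1), sq_abs (v 0), sq_abs (v 1)]

lemma norm_integral_le_of_abs_integral_apply_le {α : Type*} [MeasurableSpace α] {μ : Measure α}
    {F : α → EuclideanSpace ℝ (Fin 2)} {b₀ b₁ : ℝ}
    (h₀ : |∫ x, F x 0 ∂μ| ≤ b₀) (h₁ : |∫ x, F x 1 ∂μ| ≤ b₁) :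
    ‖∫ x, F x ∂μ‖ ≤ b₀ + b₁ := by
  by_cases hF : Integrable F μ
  · have apply_integral (i : Fin 2) : (∫ x, F x ∂μ) i = ∫ x, F x i ∂μ :=
      ((EuclideanSpace.proj i).integral_comp_comm hF).symm
    calc ‖∫ x, F x ∂μ‖ ≤ |(∫ x, F x ∂μ) 0| + |(∫ x, F x ∂μ) 1| :=
          EuclideanSpace.norm_le_abs_add_abs _
      _ ≤ b₀ + b₁ := by rw [apply_integral, apply_integral]; exact add_le_add h₀ h₁
  · rw [integral_undef hF, norm_zero]
    exact add_nonneg ((abs_nonneg _).trans h₀) ((abs_nonneg _).trans h₁)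

lemma norm_integral_smul_cos_sin_le {g : ℝ → ℝ} (hg : Integrable g) (a₁ a₂ k φ₁ φ₂ : ℝ)
    {F : ℝ → EuclideanSpace ℝ (Fin 2)}
    (hF : ∀ ξ, (F ξ).ofLp = g ξ • ![a₁ * Real.cos (k * ξ + φ₁), a₂ * Real.sin (k * ξ + φ₂)]) :
    ‖∫ ξ, F ξ‖ ≤ (|a₁| + |a₂|) * ‖∫ ξ : ℝ, (g ξ : ℂ) * cexp (I * k * ξ)‖ := by
  have hF₀ : ∫ ξ, F ξ 0 = a₁ * ∫ ξ, g ξ * Real.cos (k * ξ + φ₁) := by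
    rw [← integral_const_mul]
    congr 1 with ξ
    simp only [hF, Pi.smul_apply, Matrix.cons_val_zero, smul_eq_mul]
    ring
  have hF₁ : ∫ ξ, F ξ 1 = a₂ * ∫ ξ, g ξ * Real.sin (k * ξ + φ₂) := by
    rw [← integral_const_mul]
    congr 1 with ξ
    simp only [hF, Pi.smul_apply, Matrix.cons_val_one, Matrix.cons_val_zero, smul_eq_mul]
    ring
  rw [add_mul]
  apply norm_integral_le_of_abs_integral_apply_le
  · rw [hF₀, abs_mul]
    exact mul_le_mul_of_nonneg_left (abs_integral_mul_cos_le k φ₁ hg) (abs_nonneg a₁)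
  · rw [hF₁, abs_mul]
    exact mul_le_mul_of_nonneg_left (abs_integral_mul_sin_le k φ₂ hg) (abs_nonneg a₂)

theorem stmt_12_general (m c q : ℝ) (k : ℝ) (hk : k ≠ 0)
    (ε₀ : ℝ → ℝ) (hC2 : ContDiff ℝ 2 ε₀)
    (h0 : Integrable ε₀) (h1 : Integrable (deriv ε₀)) (h2 : Integrable (deriv (deriv ε₀)))
    (a₁ a₂ φ₁ φ₂ : ℝ)
    (eps : ℝ → ℝ → EuclideanSpace ℝ (Fin 2))
    (heps : ∀ η ξ : ℝ, eps η ξ =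
      ε₀ (ξ / η) • ![a₁ * Real.cos (k * ξ + φ₁), a₂ * Real.sin (k * ξ + φ₂)])
    (Iosc : ℝ → ℂ)
    (hIosc : ∀ η : ℝ, Iosc η = ∫ ξ : ℝ, (ε₀ (ξ / η) : ℂ) * Complex.exp (Complex.I * k * ξ))
    (uf : ℝ → EuclideanSpace ℝ (Fin 2))
    (huf : ∀ η : ℝ, uf η = (q / (m * c ^ 2)) • ∫ ξ : ℝ, eps η ξ)
    (Ef : ℝ → ℝ) (hEf : ∀ η : ℝ, Ef η = ‖uf η‖ ^ 2 / 2) :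
    (∀ η : ℝ, 0 < η →
      ‖Iosc η‖ ≤ ((⨆ x : ℝ, |deriv ε₀ x|) + ∫ x : ℝ, |deriv (deriv ε₀) x|) / (η * k ^ 2)) ∧
    Tendsto Iosc atTop (nhds 0) ∧
    Tendsto uf atTop (nhds 0) ∧
    Tendsto Ef atTop (nhds 0) := by
  set D := ∫ x : ℝ, |deriv (deriv ε₀) x|
  have hI_le (η : ℝ) (hη : 0 < η) : ‖Iosc η‖ ≤ D / (η * k ^ 2) :=
    hIosc η ▸ norm_integral_comp_div_mul_cexp_le hC2 h0 h1 h2 hk hη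
  have hI : Tendsto Iosc atTop (nhds 0) := by
    refine squeeze_zero_norm' (eventually_gt_atTop 0 |>.mono hI_le) ?_
    exact tendsto_const_nhds.div_atTop (tendsto_id.atTop_mul_const (by positivity))
  have hu_le (η : ℝ) (hη : 0 < η) : ‖uf η‖ ≤ |q / (m * c ^ 2)| * ((|a₁| + |a₂|) * ‖Iosc η‖) := by
    rw [huf, norm_smul, Real.norm_eq_abs, hIosc]
    gcongr
    exact norm_integral_smul_cos_sin_le (h0.comp_div hη.ne') a₁ a₂ k φ₁ φ₂ (heps η)
  have hu : Tendsto uf atTop (nhds 0) := by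
    refine squeeze_zero_norm' (eventually_gt_atTop 0 |>.mono hu_le) ?_
    simpa using (hI.norm.const_mul (|a₁| + |a₂|)).const_mul |q / (m * c ^ 2)|
  refine ⟨fun η hη => (hI_le η hη).trans ?_, hI, hu, ?_⟩
  · gcongr
    exact le_add_of_nonneg_left (Real.iSup_nonneg fun x => abs_nonneg _)
  · rw [funext hEf]
    simpa using (hu.norm.pow 2).div_const 2

/-- **generalized Lawson–Woodward theorem.** For a C² envelope
`ε₀` with `ε₀, ε₀', ε₀'' ∈ L¹` and `ε₀'` bounded, and `k ≠ 0`, the oscillatory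
integral `I(η) = ∫_ℝ ε₀(ξ/η)e^{ikξ}dξ` obeys
`|I(η)| ≤ (sup|ε₀'| + ∫|ε₀''|)/(ηk²)` for `η > 0`, hence `I(η) → 0` as `η → ∞`;
consequently, for the modulated monochromatic pump
`ε⊥(ξ) = ε₀(ξ/η)(a₁cos(kξ+φ₁), a₂sin(kξ+φ₂))`, the final transverse momentum
`u_f⊥(η) = (q/(mc²))∫_ℝ ε⊥` and the final energy gain `𝓔_f(η) = ‖u_f⊥(η)‖²/2`
of a particle initially at rest both tend to `0` as `η → ∞`. -/
theorem stmt_12 (m c q : ℝ) (hm : 0 < m) (hc : 0 < c) (k : ℝ) (hk : k ≠ 0)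
    (ε₀ : ℝ → ℝ) (hC2 : ContDiff ℝ 2 ε₀)
    (h0 : Integrable ε₀) (h1 : Integrable (deriv ε₀)) (h2 : Integrable (deriv (deriv ε₀)))
    (hbdd : ∃ M : ℝ, ∀ x : ℝ, |deriv ε₀ x| ≤ M)
    (a₁ a₂ φ₁ φ₂ : ℝ)
    (eps : ℝ → ℝ → EuclideanSpace ℝ (Fin 2))
    (heps : ∀ η ξ : ℝ, eps η ξ =
      ε₀ (ξ / η) • ![a₁ * Real.cos (k * ξ + φ₁), a₂ * Real.sin (k * ξ + φ₂)])
    (Iosc : ℝ → ℂ)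
    (hIosc : ∀ η : ℝ, Iosc η = ∫ ξ : ℝ, (ε₀ (ξ / η) : ℂ) * Complex.exp (Complex.I * k * ξ))
    (uf : ℝ → EuclideanSpace ℝ (Fin 2))
    (huf : ∀ η : ℝ, uf η = (q / (m * c ^ 2)) • ∫ ξ : ℝ, eps η ξ)
    (Ef : ℝ → ℝ) (hEf : ∀ η : ℝ, Ef η = ‖uf η‖ ^ 2 / 2) :
    (∀ η : ℝ, 0 < η →
      ‖Iosc η‖ ≤ ((⨆ x : ℝ, |deriv ε₀ x|) + ∫ x : ℝ, |deriv (deriv ε₀) x|) / (η * k ^ 2)) ∧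
    Tendsto Iosc atTop (nhds 0) ∧
    Tendsto uf atTop (nhds 0) ∧
    Tendsto Ef atTop (nhds 0) :=
  stmt_12_general m c q k hk ε₀ hC2 h0 h1 h2 a₁ a₂ φ₁ φ₂ eps heps Iosc hIosc uf huf Ef hEf
end

section
/- Let n ≥ 1, k ≠ 0, and let f : ℝ → ℂ be C^{n+1} with f^{(h)} ∈ L¹(ℝ) for all 0 ≤ h ≤ n+1 and with f^{(n)} bounded. Then for every ξ ∈ ℝ: ∫_{−∞}^{ξ} f(ζ)e^{ikζ} dζ = −∑_{h=0}^{n−1} (i/k)^{h+1}·f^{(h)}(ξ)·e^{ikξ} + R_n(ξ), where R_n(ξ) = (i/k)^{n}·∫_{−∞}^{ξ} f^{(n)}(ζ)e^{ikζ} dζ, and |R_n(ξ)| ≤ |k|^{−(n+1)}·(|f^{(n)}(ξ)| + ∫_{−∞}^{ξ} |f^{(n+1)}(ζ)| dζ) ≤ (sup_ℝ|f^{(n)}| + ∫_ℝ|f^{(n+1)}|)/|k|^{n+1}. In particular R_n(ξ) = O(1/k^{n+1}) uniformly in ξ, so the displayed sum is an asymptotic expansion in 1/k of the oscillatory integral.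 -/
open MeasureTheory

/-!
Since `e^{ikζ} = -(i/k) (e^{ikζ})'`, each integration by parts moves one derivative onto `f`
at the cost of a factor `i/k`; the boundary term at `-∞` vanishes because an integrable
function with integrable derivative tends to `0` there. Iterating `n` times gives the
expansion, and one more integration by parts of the remainder, estimated crudely with
`|e^{ikζ}| = 1`, gives its bound.
-/

lemma norm_cexp_I_mul_mul (k ζ : ℝ) : ‖Complex.exp (Complex.I * k * ζ)‖ = 1 := by
  rw [mul_assoc, ← Complex.ofReal_mul, Complex.norm_exp_I_mul_ofReal]

lemma hasDerivAt_cexp_I_mul_mul (k x : ℝ) :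
    HasDerivAt (fun ζ : ℝ => Complex.exp (Complex.I * k * ζ))
      (Complex.I * k * Complex.exp (Complex.I * k * x)) x := by
  have hlin : HasDerivAt (fun ζ : ℝ => Complex.I * k * ζ) (Complex.I * k) x := by
    simpa using (hasDerivAt_id x).ofReal_comp.const_mul (Complex.I * k)
  simpa [mul_comm] using hlin.cexp

lemma MeasureTheory.Integrable.mul_cexp_I_mul_mul {μ : Measure ℝ} {g : ℝ → ℂ}
    (hg : Integrable g μ) (k : ℝ) :
    Integrable (fun ζ => g ζ * Complex.exp (Complex.I * k * ζ)) μ := by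
  refine (hg.bdd_mul (c := 1) (by fun_prop) (.of_forall fun ζ => ?_)).congr
    (.of_forall fun ζ => mul_comm _ _)
  rw [norm_cexp_I_mul_mul]

section Parts

variable {k : ℝ} {g g' : ℝ → ℂ}

theorem integral_Iic_mul_cexp_eq (hk : k ≠ 0) (hd : ∀ x, HasDerivAt g (g' x) x)
    (hg : Integrable g) (hg' : Integrable g') (ξ : ℝ) :
    (∫ ζ in Set.Iic ξ, g ζ * Complex.exp (Complex.I * k * ζ)) =
      -((Complex.I / k) * g ξ * Complex.exp (Complex.I * k * ξ)) +
        (Complex.I / k) * ∫ ζ in Set.Iic ξ, g' ζ * Complex.exp (Complex.I * k * ζ) := by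
  set e : ℝ → ℂ := fun ζ => Complex.exp (Complex.I * k * ζ)
  have hderiv : ∀ x, HasDerivAt (fun ζ => g ζ * e ζ)
      (g' x * e x + Complex.I * k * (g x * e x)) x := fun x =>
    ((hd x).mul (hasDerivAt_cexp_I_mul_mul k x)).congr_deriv (by ring)
  have hlim : Filter.Tendsto (fun ζ => g ζ * e ζ) Filter.atBot (nhds 0) := by
    have hg0 : Filter.Tendsto g Filter.atBot (nhds 0) :=
      tendsto_zero_of_hasDerivAt_of_integrableOn_Iic (a := 0)
        (fun x _ => hd x) hg'.integrableOn hg.integrableOn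
    rw [tendsto_zero_iff_norm_tendsto_zero] at hg0 ⊢
    simpa only [norm_mul, e, norm_cexp_I_mul_mul, mul_one] using hg0
  have hint' := (hg'.mul_cexp_I_mul_mul k).integrableOn (s := Set.Iic ξ)
  have hint := ((hg.mul_cexp_I_mul_mul k).const_mul (Complex.I * k)).integrableOn
    (s := Set.Iic ξ)
  have hftc := integral_Iic_of_hasDerivAt_of_tendsto' (fun x _ => hderiv x)
    (hint'.add hint) hlim
  rw [integral_add hint' hint, integral_const_mul] at hftc
  have hdiv : Complex.I / k * (Complex.I * k) = -1 := by
    have hk' : (k : ℂ) ≠ 0 := by exact_mod_cast hk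
    field_simp
    simp
  linear_combination -(Complex.I / k) * hftc + (∫ ζ in Set.Iic ξ, g ζ * e ζ) * hdiv

theorem norm_integral_Iic_mul_cexp_le (hk : k ≠ 0) (hd : ∀ x, HasDerivAt g (g' x) x)
    (hg : Integrable g) (hg' : Integrable g') (ξ : ℝ) :
    ‖∫ ζ in Set.Iic ξ, g ζ * Complex.exp (Complex.I * k * ζ)‖ ≤
      |k|⁻¹ * (‖g ξ‖ + ∫ ζ in Set.Iic ξ, ‖g' ζ‖) := by
  have hIk : ‖Complex.I / k‖ = |k|⁻¹ := by simp
  have hrem : ‖∫ ζ in Set.Iic ξ, g' ζ * Complex.exp (Complex.I * k * ζ)‖ ≤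
      ∫ ζ in Set.Iic ξ, ‖g' ζ‖ := by
    refine (norm_integral_le_integral_norm _).trans_eq ?_
    simp only [norm_mul, norm_cexp_I_mul_mul, mul_one]
  rw [integral_Iic_mul_cexp_eq hk hd hg hg' ξ]
  calc _ ≤ ‖(Complex.I / k) * g ξ * Complex.exp (Complex.I * k * ξ)‖ +
        ‖(Complex.I / k) * ∫ ζ in Set.Iic ξ, g' ζ * Complex.exp (Complex.I * k * ζ)‖ :=
        (norm_add_le _ _).trans_eq (by rw [norm_neg])
    _ ≤ |k|⁻¹ * ‖g ξ‖ + |k|⁻¹ * ∫ ζ in Set.Iic ξ, ‖g' ζ‖ := by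
        rw [norm_mul, norm_mul, norm_mul, hIk, norm_cexp_I_mul_mul, mul_one]
        gcongr
    _ = _ := by ring

end Parts

theorem integral_Iic_mul_cexp_eq_sum_add {k : ℝ} (hk : k ≠ 0) {g : ℕ → ℝ → ℂ} {n : ℕ}
    (hd : ∀ m < n, ∀ x, HasDerivAt (g m) (g (m + 1) x) x)
    (hg : ∀ m ≤ n, Integrable (g m)) (ξ : ℝ) :
    (∫ ζ in Set.Iic ξ, g 0 ζ * Complex.exp (Complex.I * k * ζ)) =
      -(∑ h ∈ Finset.range n,
          (Complex.I / k) ^ (h + 1) * g h ξ * Complex.exp (Complex.I * k * ξ)) +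
        (Complex.I / k) ^ n * ∫ ζ in Set.Iic ξ, g n ζ * Complex.exp (Complex.I * k * ζ) := by
  induction n with
  | zero => simp
  | succ n ih =>
    rw [ih (fun m hm => hd m (by omega)) (fun m hm => hg m (by omega)),
      integral_Iic_mul_cexp_eq hk (hd n n.lt_succ_self) (hg n (by omega)) (hg (n + 1) le_rfl),
      Finset.sum_range_succ]
    ring

lemma ContDiff.hasDerivAt_iteratedDeriv {F : Type*} [NormedAddCommGroup F] [NormedSpace ℝ F]
    {f : ℝ → F} {N : ℕ} (hf : ContDiff ℝ N f)
    {m : ℕ} (hm : m < N) (x : ℝ) :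
    HasDerivAt (iteratedDeriv m f) (iteratedDeriv (m + 1) f x) x := by
  rw [iteratedDeriv_succ]
  exact ((hf.differentiable_iteratedDeriv m (by exact_mod_cast hm)) x).hasDerivAt

lemma zpow_neg_natCast_sub_one {α : Type*} [DivisionRing α] (a : α) (n : ℕ) :
    a ^ (-(n : ℤ) - 1) = (a ^ (n + 1))⁻¹ := by
  rw [← zpow_natCast, ← zpow_neg]
  push_cast
  ring_nf

theorem stmt_17_general (n : ℕ) (k : ℝ) (hk : k ≠ 0) (f : ℝ → ℂ)
    (hC : ContDiff ℝ (n + 1) f)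
    (hint : ∀ h : ℕ, h ≤ n + 1 → Integrable (iteratedDeriv h f))
    (hbdd : ∃ M : ℝ, ∀ x : ℝ, ‖iteratedDeriv n f x‖ ≤ M)
    (Rn : ℝ → ℂ)
    (hRn : ∀ ξ : ℝ, Rn ξ = (Complex.I / k) ^ n *
      ∫ ζ in Set.Iic ξ, iteratedDeriv n f ζ * Complex.exp (Complex.I * k * ζ)) :
    (∀ ξ : ℝ,
      (∫ ζ in Set.Iic ξ, f ζ * Complex.exp (Complex.I * k * ζ)) =
        -(∑ h ∈ Finset.range n,
            (Complex.I / k) ^ (h + 1) * iteratedDeriv h f ξ * Complex.exp (Complex.I * k * ξ)) +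
          Rn ξ) ∧
    (∀ ξ : ℝ,
      ‖Rn ξ‖ ≤ |k| ^ (-(n : ℤ) - 1) *
          (‖iteratedDeriv n f ξ‖ + ∫ ζ in Set.Iic ξ, ‖iteratedDeriv (n + 1) f ζ‖) ∧
      |k| ^ (-(n : ℤ) - 1) *
          (‖iteratedDeriv n f ξ‖ + ∫ ζ in Set.Iic ξ, ‖iteratedDeriv (n + 1) f ζ‖) ≤
        ((⨆ x : ℝ, ‖iteratedDeriv n f x‖) + ∫ ζ : ℝ, ‖iteratedDeriv (n + 1) f ζ‖) /
          |k| ^ (n + 1)) := by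
  have hd : ∀ m < n + 1, ∀ x, HasDerivAt (iteratedDeriv m f) (iteratedDeriv (m + 1) f x) x :=
    fun m hm => hC.hasDerivAt_iteratedDeriv (by exact_mod_cast hm)
  have hpow : |k| ^ (-(n : ℤ) - 1) = |k|⁻¹ ^ n * |k|⁻¹ := by
    rw [zpow_neg_natCast_sub_one |k| n, pow_succ, mul_inv, inv_pow]
  refine ⟨fun ξ => ?expansion, fun ξ => ⟨?remainder, ?uniform⟩⟩
  case expansion =>
    simpa only [hRn, iteratedDeriv_zero] using integral_Iic_mul_cexp_eq_sum_add hk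
      (fun m hm => hd m (by omega)) (fun m hm => hint m (by omega)) ξ
  case remainder =>
    rw [hRn, norm_mul, norm_pow, norm_div, Complex.norm_I, Complex.norm_real, one_div,
      Real.norm_eq_abs, hpow, mul_assoc]
    gcongr
    exact norm_integral_Iic_mul_cexp_le hk (hd n n.lt_succ_self) (hint n (by omega))
      (hint (n + 1) le_rfl) ξ
  case uniform =>
    obtain ⟨M, hM⟩ := hbdd
    rw [zpow_neg_natCast_sub_one |k| n, div_eq_inv_mul]
    refine mul_le_mul_of_nonneg_left (add_le_add ?_ ?_) (by positivity)
    · exact le_ciSup ⟨M, Set.forall_mem_range.mpr hM⟩ ξ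
    · exact setIntegral_le_integral (hint (n + 1) le_rfl).norm
        (.of_forall fun x => norm_nonneg _)

/-- For `n ≥ 1`, `k ≠ 0` and `f : ℝ → ℂ` of class `C^{n+1}`
with `f^{(h)} ∈ L¹` for `0 ≤ h ≤ n+1` and `f^{(n)}` bounded:
`∫_{−∞}^ξ f(ζ)e^{ikζ}dζ = −∑_{h<n} (i/k)^{h+1} f^{(h)}(ξ)e^{ikξ} + R_n(ξ)` with
`R_n(ξ) = (i/k)ⁿ∫_{−∞}^ξ f^{(n)}(ζ)e^{ikζ}dζ` and
`|R_n(ξ)| ≤ |k|^{−(n+1)}(|f^{(n)}(ξ)| + ∫_{−∞}^ξ|f^{(n+1)}|)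
  ≤ (sup|f^{(n)}| + ∫_ℝ|f^{(n+1)}|)/|k|^{n+1}`,
an asymptotic expansion of the oscillatory integral in powers of `1/k` with a
remainder `O(1/k^{n+1})` uniform in `ξ`. -/
theorem stmt_17 (n : ℕ) (hn : 1 ≤ n) (k : ℝ) (hk : k ≠ 0) (f : ℝ → ℂ)
    (hC : ContDiff ℝ (n + 1) f)
    (hint : ∀ h : ℕ, h ≤ n + 1 → Integrable (iteratedDeriv h f))
    (hbdd : ∃ M : ℝ, ∀ x : ℝ, ‖iteratedDeriv n f x‖ ≤ M)
    (Rn : ℝ → ℂ)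
    (hRn : ∀ ξ : ℝ, Rn ξ = (Complex.I / k) ^ n *
      ∫ ζ in Set.Iic ξ, iteratedDeriv n f ζ * Complex.exp (Complex.I * k * ζ)) :
    (∀ ξ : ℝ,
      (∫ ζ in Set.Iic ξ, f ζ * Complex.exp (Complex.I * k * ζ)) =
        -(∑ h ∈ Finset.range n,
            (Complex.I / k) ^ (h + 1) * iteratedDeriv h f ξ * Complex.exp (Complex.I * k * ξ)) +
          Rn ξ) ∧
    (∀ ξ : ℝ,
      ‖Rn ξ‖ ≤ |k| ^ (-(n : ℤ) - 1) *
          (‖iteratedDeriv n f ξ‖ + ∫ ζ in Set.Iic ξ, ‖iteratedDeriv (n + 1) f ζ‖) ∧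
      |k| ^ (-(n : ℤ) - 1) *
          (‖iteratedDeriv n f ξ‖ + ∫ ζ in Set.Iic ξ, ‖iteratedDeriv (n + 1) f ζ‖) ≤
        ((⨆ x : ℝ, ‖iteratedDeriv n f x‖) + ∫ ζ : ℝ, ‖iteratedDeriv (n + 1) f ζ‖) /
          |k| ^ (n + 1)) :=
  stmt_17_general n k hk f hC hint hbdd Rn hRn
end
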